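/- Let G be a finite simple graph and construct the Stable Roommates instance with agents a₁ᵛ, …, a₅ᵛ, b₁ᵛ, …, b₅ᵛ for each v ∈ V(G) and preferences a₁ᵛ: b₁ᵛ ≻ b₂ᵛ; a₂ᵛ: b₃ᵛ ≻ b₂ᵛ ≻ [N*(v)] ≻ b₁ᵛ (where [N*(v)] is a fixed arbitrary strict order of {a₂ʷ : w a neighbor of v in G}); a₃ᵛ: b₂ᵛ ≻ b₃ᵛ; a₄ᵛ: b₅ᵛ ≻ b₃ᵛ ≻ b₄ᵛ; a₅ᵛ: b₄ᵛ ≻ b₅ᵛ; b₁ᵛ: a₂ᵛ ≻ a₁ᵛ; b₂ᵛ: a₁ᵛ ≻ a₂ᵛ ≻ a₃ᵛ; b₃ᵛ: a₃ᵛ ≻ a₄ᵛ ≻ a₂ᵛ; b₄ᵛ: a₄ᵛ ≻ a₅ᵛ; b₅ᵛ: a₅ᵛ ≻ a₄ᵛ. Let M1 := {{aᵢᵛ, bᵢᵛ} : i ∈ {1,…,5}, v ∈ V(G)} and P := {{a₂ᵛ, b₂ᵛ} : v ∈ V(G)}, and let ℓ be a nonnegative integer. If M* is a stable matching with M* ∩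 P = ∅ and |M1 △ M*| ≤ 8|V(G)| − 4ℓ, then X := {v ∈ V(G) : {a₂ᵛ, b₁ᵛ} ∈ M*} is an independent set of G with |X| ≥ ℓ. -/
import Mathlib


open scoped symmDiff

section SRDefs

variable {A : Type*}

/-- A matching in a Stable Roommates instance with acceptability `acc`:
a set of unordered pairs of mutually acceptable agents, each agent in at most one pair. -/
def IsSRMatching (acc : A → A → Prop) (M : Finset (Sym2 A)) : Prop :=
  (∀ a b : A, s(a, b) ∈ M → acc a b) ∧
  (∀ a b c : A, s(a, b) ∈ M → s(a, c) ∈ M → b = c)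

def Matched (M : Finset (Sym2 A)) (a : A) : Prop := ∃ b, s(a, b) ∈ M

/-- A pair `{a, b}` of acceptable agents blocks `M`: each of the two agents is
unmatched or strictly prefers the other to its partner (smaller rank = better). -/
def SRBlocks (acc : A → A → Prop) (rk : A → A → ℕ) (M : Finset (Sym2 A)) (a b : A) : Prop :=
  acc a b ∧
  (¬ Matched M a ∨ ∃ c, s(a, c) ∈ M ∧ rk a b < rk a c) ∧
  (¬ Matched M b ∨ ∃ c, s(b, c) ∈ M ∧ rk b a < rk b c)

/-- A stable matching: a matching not blocked by any pair. -/
def IsStable (acc : A → A → Prop) (rk : A → A → ℕ) (M : Finset (Sym2 A)) : Prop :=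
  IsSRMatching acc M ∧ ∀ a b, ¬ SRBlocks acc rk M a b

end SRDefs

section Construction

variable {V : Type*}

/-- The agents of the reduction: `(false, i, v)` is `a_{i+1}^v` and `(true, i, v)` is `b_{i+1}^v`. -/
abbrev Ag (V : Type*) := Bool × Fin 5 × V

def aA (i : Fin 5) (v : V) : Ag V := (false, i, v)

def bA (i : Fin 5) (v : V) : Ag V := (true, i, v)

/-- The (one-sided) list of acceptable partners, following the preference lists. -/
def srAccP (G : SimpleGraph V) : Ag V → Ag V → Prop := fun x y =>
  (∃ v, x = aA 0 v ∧ (y = bA 0 v ∨ y = bA 1 v)) ∨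
  (∃ v, x = aA 1 v ∧ (y = bA 2 v ∨ y = bA 1 v ∨ y = bA 0 v)) ∨
  (∃ v w, x = aA 1 v ∧ G.Adj v w ∧ y = aA 1 w) ∨
  (∃ v, x = aA 2 v ∧ (y = bA 1 v ∨ y = bA 2 v)) ∨
  (∃ v, x = aA 3 v ∧ (y = bA 4 v ∨ y = bA 2 v ∨ y = bA 3 v)) ∨
  (∃ v, x = aA 4 v ∧ (y = bA 3 v ∨ y = bA 4 v))

/-- Symmetric acceptability relation of the constructed instance. -/
def srAcc (G : SimpleGraph V) (x y : Ag V) : Prop := srAccP G x y ∨ srAccP G y x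

/-- Rank of `b_{j+1}^v` in the preferences of `a_{i+1}^v` (`99` = unacceptable junk value):
`a₁ᵛ: b₁ᵛ ≻ b₂ᵛ`; `a₂ᵛ: b₃ᵛ ≻ b₂ᵛ ≻ [N*(v)] ≻ b₁ᵛ` (the neighbors get ranks `2 + ord`,
and `b₁ᵛ` gets rank `2 + nV`); `a₃ᵛ: b₂ᵛ ≻ b₃ᵛ`; `a₄ᵛ: b₅ᵛ ≻ b₃ᵛ ≻ b₄ᵛ`; `a₅ᵛ: b₄ᵛ ≻ b₅ᵛ`. -/
def rkAB (nV : ℕ) : Fin 5 → Fin 5 → ℕ :=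
  ![![0, 1, 99, 99, 99],
    ![2 + nV, 1, 0, 99, 99],
    ![99, 0, 1, 99, 99],
    ![99, 99, 1, 2, 0],
    ![99, 99, 99, 0, 1]]

/-- Rank of `a_{j+1}^v` in the preferences of `b_{i+1}^v`:
`b₁ᵛ: a₂ᵛ ≻ a₁ᵛ`; `b₂ᵛ: a₁ᵛ ≻ a₂ᵛ ≻ a₃ᵛ`; `b₃ᵛ: a₃ᵛ ≻ a₄ᵛ ≻ a₂ᵛ`;
`b₄ᵛ: a₄ᵛ ≻ a₅ᵛ`; `b₅ᵛ: a₅ᵛ ≻ a₄ᵛ`. -/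
def rkBA : Fin 5 → Fin 5 → ℕ :=
  ![![1, 0, 99, 99, 99],
    ![0, 1, 2, 99, 99],
    ![99, 2, 0, 1, 99],
    ![99, 99, 99, 0, 1],
    ![99, 99, 99, 1, 0]]

/-- The rank function of the constructed instance; `ord v w` encodes the fixed
arbitrary strict order `[N*(v)]` of the neighbors of `v`. -/
def srRk [DecidableEq V] (ord : V → V → ℕ) (nV : ℕ) : Ag V → Ag V → ℕ
  | (false, i, v), (true, j, w) => if v = w then rkAB nV i j else 99
  | (false, _, v), (false, _, w) => 2 + ord v w
  | (true, i, v), (false, j, w) => if v = w then rkBA i j else 99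
  | (true, _, _), (true, _, _) => 99

/-- The initial matching `M1 = {{aᵢᵛ, bᵢᵛ} : i ∈ [5], v ∈ V}`. -/
def M1SR (V : Type*) [Fintype V] [DecidableEq V] : Finset (Sym2 (Ag V)) :=
  Finset.univ.image (fun p : Fin 5 × V => s(aA p.1 p.2, bA p.1 p.2))

/-- The forbidden pairs `P = {{a₂ᵛ, b₂ᵛ} : v ∈ V}`. -/
def PSR (V : Type*) [Fintype V] [DecidableEq V] : Finset (Sym2 (Ag V)) :=
  Finset.univ.image (fun v : V => s(aA 1 v, bA 1 v))

end Construction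

section Helpers

variable {V : Type*}

variable {V : Type*}

lemma rk_ab [DecidableEq V] (ord : V → V → ℕ) (n : ℕ) (i j : Fin 5) (v : V) :
    srRk ord n (aA i v) (bA j v) = rkAB n i j := by simp [srRk, aA, bA]

lemma rk_ba [DecidableEq V] (ord : V → V → ℕ) (n : ℕ) (i j : Fin 5) (v : V) :
    srRk ord n (bA i v) (aA j v) = rkBA i j := by simp [srRk, aA, bA]

lemma rk_aa [DecidableEq V] (ord : V → V → ℕ) (n : ℕ) (i j : Fin 5) (v w : V) :
    srRk ord n (aA i v) (aA j w) = 2 + ord v w := rfl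

lemma srAccP_dest {G : SimpleGraph V} {x y : Ag V} (h : srAccP G x y) :
    (∃ i j v, rkBA j i ≠ 99 ∧ x = aA i v ∧ y = bA j v) ∨
    (∃ v w, G.Adj v w ∧ x = aA 1 v ∧ y = aA 1 w) := by
  rcases h with ⟨v,hx,hy|hy⟩|⟨v,hx,hy|hy|hy⟩|⟨v,w,hx,ha,hy⟩|⟨v,hx,hy|hy⟩|⟨v,hx,hy|hy|hy⟩|⟨v,hx,hy|hy⟩
  · exact Or.inl ⟨0,0,v, by decide, hx, hy⟩
  · exact Or.inl ⟨0,1,v, by decide, hx, hy⟩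
  · exact Or.inl ⟨1,2,v, by decide, hx, hy⟩
  · exact Or.inl ⟨1,1,v, by decide, hx, hy⟩
  · exact Or.inl ⟨1,0,v, by decide, hx, hy⟩
  · exact Or.inr ⟨v,w,ha,hx,hy⟩
  · exact Or.inl ⟨2,1,v, by decide, hx, hy⟩
  · exact Or.inl ⟨2,2,v, by decide, hx, hy⟩
  · exact Or.inl ⟨3,4,v, by decide, hx, hy⟩
  · exact Or.inl ⟨3,2,v, by decide, hx, hy⟩
  · exact Or.inl ⟨3,3,v, by decide, hx, hy⟩
  · exact Or.inl ⟨4,3,v, by decide, hx, hy⟩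
  · exact Or.inl ⟨4,4,v, by decide, hx, hy⟩

lemma acc_mk (G : SimpleGraph V) (i j : Fin 5) (v : V) (h : rkBA j i ≠ 99) :
    srAcc G (aA i v) (bA j v) := by
  left
  fin_cases i <;> fin_cases j <;> simp_all [rkBA] <;> unfold srAccP <;> simp [aA, bA] <;> tauto

lemma mem_symm {M : Finset (Sym2 (Ag V))} {x y : Ag V} (h : s(x, y) ∈ M) : s(y, x) ∈ M := by
  rwa [Sym2.eq_swap] at h

lemma partner_b {G : SimpleGraph V} {M : Finset (Sym2 (Ag V))}
    (hM : IsSRMatching (srAcc G) M) {j : Fin 5} {v : V} {c : Ag V}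
    (h : s(bA j v, c) ∈ M) : ∃ i, rkBA j i ≠ 99 ∧ c = aA i v := by
  have hacc := hM.1 _ _ h
  rcases hacc with h' | h' <;> rcases srAccP_dest h' with ⟨i,j',v',hr,hx,hy⟩|⟨v',w',ha,hx,hy⟩
  · exact absurd hx (by simp [aA, bA])
  · exact absurd hx (by simp [aA, bA])
  · obtain ⟨hj, hv⟩ : j' = j ∧ v' = v := by simpa [bA, Prod.ext_iff, eq_comm] using hy
    subst hj; subst hv
    exact ⟨i, hr, hx⟩
  · exact absurd hy (by simp [aA, bA])

lemma partner_a {G : SimpleGraph V} {M : Finset (Sym2 (Ag V))}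
    (hM : IsSRMatching (srAcc G) M) {i : Fin 5} {v : V} {c : Ag V}
    (h : s(aA i v, c) ∈ M) :
    (∃ j, rkBA j i ≠ 99 ∧ c = bA j v) ∨ (∃ w, i = 1 ∧ G.Adj v w ∧ c = aA 1 w) := by
  have hacc := hM.1 _ _ h
  rcases hacc with h' | h' <;> rcases srAccP_dest h' with ⟨i',j',v',hr,hx,hy⟩|⟨v',w',ha,hx,hy⟩
  · obtain ⟨hi, hv⟩ : i' = i ∧ v' = v := by simpa [aA, Prod.ext_iff, eq_comm] using hx
    subst hi; subst hv
    exact Or.inl ⟨j', hr, hy⟩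
  · obtain ⟨hi, hv⟩ : (1 : Fin 5) = i ∧ v' = v := by simpa [aA, Prod.ext_iff, eq_comm] using hx
    subst hv
    exact Or.inr ⟨w', hi.symm, ha, hy⟩
  · exact absurd hy (by simp [aA, bA])
  · obtain ⟨hi, hv⟩ : (1 : Fin 5) = i ∧ w' = v := by simpa [aA, Prod.ext_iff, eq_comm] using hy
    subst hv
    exact Or.inr ⟨v', hi.symm, ha.symm, hx⟩

lemma noblock {G : SimpleGraph V} {rk : Ag V → Ag V → ℕ} {M : Finset (Sym2 (Ag V))}
    (hstab : IsStable (srAcc G) rk M) {x y : Ag V} (hacc : srAcc G x y) :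
    (∃ c, s(x, c) ∈ M ∧ rk x c ≤ rk x y) ∨ (∃ c, s(y, c) ∈ M ∧ rk y c ≤ rk y x) := by
  rcases Classical.em (¬ Matched M x ∨ ∃ c, s(x, c) ∈ M ∧ rk x y < rk x c) with hA | hA
  · have hB : ¬ (¬ Matched M y ∨ ∃ c, s(y, c) ∈ M ∧ rk y x < rk y c) :=
      fun hB => hstab.2 x y ⟨hacc, hA, hB⟩
    push_neg at hB
    obtain ⟨⟨c, hc⟩, hall⟩ := hB
    exact Or.inr ⟨c, hc, hall c hc⟩
  · push_neg at hA
    obtain ⟨⟨c, hc⟩, hall⟩ := hA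
    exact Or.inl ⟨c, hc, hall c hc⟩

lemma structure_v [Fintype V] [DecidableEq V] {G : SimpleGraph V} {ord : V → V → ℕ}
    {M : Finset (Sym2 (Ag V))}
    (hstab : IsStable (srAcc G) (srRk ord (Fintype.card V)) M)
    (hP : M ∩ PSR V = ∅) (v : V) :
    (s(aA 1 v, bA 0 v) ∈ M ∧ s(aA 0 v, bA 1 v) ∈ M) ∨
    (s(aA 1 v, bA 0 v) ∉ M ∧ s(aA 0 v, bA 0 v) ∈ M ∧ s(aA 2 v, bA 1 v) ∈ M ∧
     s(aA 1 v, bA 2 v) ∈ M ∧ s(aA 3 v, bA 4 v) ∈ M ∧ s(aA 4 v, bA 3 v) ∈ M) := by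
  set n := Fintype.card V with hn
  have hu := hstab.1.2
  have hP2 : s(aA 1 v, bA 1 v) ∉ M := by
    intro h
    have : s(aA 1 v, bA 1 v) ∈ M ∩ PSR V :=
      Finset.mem_inter.mpr ⟨h, Finset.mem_image.mpr ⟨v, Finset.mem_univ v, rfl⟩⟩
    rw [hP] at this
    exact absurd this (Finset.notMem_empty _)
  by_cases hX : s(aA 1 v, bA 0 v) ∈ M
  · -- v ∈ X case: derive a1-b2
    left
    refine ⟨hX, ?_⟩
    rcases noblock hstab (acc_mk G 0 1 v (by decide)) with ⟨c, hc, hrk⟩ | ⟨c, hc, hrk⟩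
    · rcases partner_a hstab.1 hc with ⟨j', hj', rfl⟩ | ⟨w, hi1, hadj, rfl⟩
      · rw [rk_ab, rk_ab] at hrk
        fin_cases j' <;> simp [rkAB, rkBA, Matrix.vecHead, Matrix.vecTail] at hj' hrk ⊢ <;> try omega
        · -- j' = 0 : a1-b1 in M, contradict via uniqueness at b1
          exact absurd (hu _ _ _ (mem_symm hc) (mem_symm hX)) (by simp [aA])
        · exact hc
      · exact absurd hi1 (by decide)
    · obtain ⟨i', hi', rfl⟩ := partner_b hstab.1 hc
      rw [rk_ba, rk_ba] at hrk
      fin_cases i' <;> simp [rkBA, Matrix.vecHead, Matrix.vecTail] at hi' hrk ⊢ <;> try omega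
      exact mem_symm hc
  · right
    refine ⟨hX, ?_⟩
    -- h1 : a1-b1 ∈ M
    have h1 : s(aA 0 v, bA 0 v) ∈ M := by
      rcases noblock hstab (acc_mk G 0 0 v (by decide)) with ⟨c, hc, hrk⟩ | ⟨c, hc, hrk⟩
      · rcases partner_a hstab.1 hc with ⟨j', hj', rfl⟩ | ⟨w, hi1, hadj, rfl⟩
        · rw [rk_ab, rk_ab] at hrk
          fin_cases j' <;> simp [rkAB, rkBA, Matrix.vecHead, Matrix.vecTail] at hj' hrk ⊢ <;> try omega
          exact hc
        · exact absurd hi1 (by decide)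
      · obtain ⟨i', hi', rfl⟩ := partner_b hstab.1 hc
        rw [rk_ba, rk_ba] at hrk
        fin_cases i' <;> simp [rkBA, Matrix.vecHead, Matrix.vecTail] at hi' hrk ⊢ <;> try omega
        · exact mem_symm hc
        · exact absurd (mem_symm hc) hX
    have h2 : s(aA 0 v, bA 1 v) ∉ M := fun h =>
      absurd (hu _ _ _ h1 h) (by simp [bA])
    -- h3 : a2-b3 ∈ M
    have h3 : s(aA 1 v, bA 2 v) ∈ M := by
      rcases noblock hstab (acc_mk G 1 1 v (by decide)) with ⟨c, hc, hrk⟩ | ⟨c, hc, hrk⟩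
      · rcases partner_a hstab.1 hc with ⟨j', hj', rfl⟩ | ⟨w, hi1, hadj, rfl⟩
        · rw [rk_ab, rk_ab] at hrk
          fin_cases j' <;> simp [rkAB, rkBA, Matrix.vecHead, Matrix.vecTail] at hj' hrk ⊢ <;> try omega
          · exact absurd hc hP2
          · exact hc
        · rw [rk_aa, rk_ab] at hrk
          simp [rkAB] at hrk
          omega
      · obtain ⟨i', hi', rfl⟩ := partner_b hstab.1 hc
        rw [rk_ba, rk_ba] at hrk
        fin_cases i' <;> simp [rkBA, Matrix.vecHead, Matrix.vecTail] at hi' hrk ⊢ <;> try omega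
        · exact absurd (mem_symm hc) h2
        · exact absurd (mem_symm hc) hP2
    have h4 : s(aA 2 v, bA 2 v) ∉ M := fun h =>
      absurd (hu _ _ _ (mem_symm h3) (mem_symm h)) (by simp [aA])
    -- h5 : a3-b2 ∈ M
    have h5 : s(aA 2 v, bA 1 v) ∈ M := by
      rcases noblock hstab (acc_mk G 2 2 v (by decide)) with ⟨c, hc, hrk⟩ | ⟨c, hc, hrk⟩
      · rcases partner_a hstab.1 hc with ⟨j', hj', rfl⟩ | ⟨w, hi1, hadj, rfl⟩
        · rw [rk_ab, rk_ab] at hrk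
          fin_cases j' <;> simp [rkAB, rkBA, Matrix.vecHead, Matrix.vecTail] at hj' hrk ⊢ <;> try omega
          · exact hc
          · exact absurd hc h4
        · exact absurd hi1 (by decide)
      · obtain ⟨i', hi', rfl⟩ := partner_b hstab.1 hc
        rw [rk_ba, rk_ba] at hrk
        fin_cases i' <;> simp [rkBA, Matrix.vecHead, Matrix.vecTail] at hi' hrk ⊢ <;> try omega
        exact absurd (mem_symm hc) h4
    have h6 : s(aA 3 v, bA 2 v) ∉ M := fun h =>
      absurd (hu _ _ _ (mem_symm h3) (mem_symm h)) (by simp [aA])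
    -- h7 : a4-b5 ∈ M
    have h7 : s(aA 3 v, bA 4 v) ∈ M := by
      rcases noblock hstab (acc_mk G 3 2 v (by decide)) with ⟨c, hc, hrk⟩ | ⟨c, hc, hrk⟩
      · rcases partner_a hstab.1 hc with ⟨j', hj', rfl⟩ | ⟨w, hi1, hadj, rfl⟩
        · rw [rk_ab, rk_ab] at hrk
          fin_cases j' <;> simp [rkAB, rkBA, Matrix.vecHead, Matrix.vecTail] at hj' hrk ⊢ <;> try omega
          · exact absurd hc h6
          · exact hc
        · exact absurd hi1 (by decide)
      · obtain ⟨i', hi', rfl⟩ := partner_b hstab.1 hc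
        rw [rk_ba, rk_ba] at hrk
        fin_cases i' <;> simp [rkBA, Matrix.vecHead, Matrix.vecTail] at hi' hrk ⊢ <;> try omega
        · exact absurd (mem_symm hc) h4
        · exact absurd (mem_symm hc) h6
    have h8 : s(aA 4 v, bA 4 v) ∉ M := fun h =>
      absurd (hu _ _ _ (mem_symm h7) (mem_symm h)) (by simp [aA])
    -- h9 : a5-b4 ∈ M
    have h9 : s(aA 4 v, bA 3 v) ∈ M := by
      rcases noblock hstab (acc_mk G 4 4 v (by decide)) with ⟨c, hc, hrk⟩ | ⟨c, hc, hrk⟩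
      · rcases partner_a hstab.1 hc with ⟨j', hj', rfl⟩ | ⟨w, hi1, hadj, rfl⟩
        · rw [rk_ab, rk_ab] at hrk
          fin_cases j' <;> simp [rkAB, rkBA, Matrix.vecHead, Matrix.vecTail] at hj' hrk ⊢ <;> try omega
          · exact hc
          · exact absurd hc h8
        · exact absurd hi1 (by decide)
      · obtain ⟨i', hi', rfl⟩ := partner_b hstab.1 hc
        rw [rk_ba, rk_ba] at hrk
        fin_cases i' <;> simp [rkBA, Matrix.vecHead, Matrix.vecTail] at hi' hrk ⊢ <;> try omega
        exact absurd (mem_symm hc) h8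
    exact ⟨h1, h5, h3, h7, h9⟩

lemma pairv {V : Type*} {i j i' j' : Fin 5} {v w : V}
    (h : s(aA i v, bA j v) = s(aA i' w, bA j' w)) : v = w := by
  rw [Sym2.eq_iff] at h
  rcases h with ⟨h1, _⟩ | ⟨h1, _⟩ <;> simp [aA, bA, Prod.ext_iff] at h1 <;> tauto

lemma mem_M1 {V : Type*} [Fintype V] [DecidableEq V] {v : V} {i j : Fin 5} :
    s(aA i v, bA j v) ∈ M1SR V ↔ i = j := by
  simp only [M1SR, Finset.mem_image, Finset.mem_univ, true_and]
  constructor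
  · rintro ⟨p, hp⟩
    rw [Sym2.eq_iff] at hp
    rcases hp with ⟨h1, h2⟩ | ⟨h1, h2⟩ <;>
      simp [aA, bA, Prod.ext_iff] at h1 h2
    omega
  · rintro rfl
    exact ⟨(i, v), rfl⟩

lemma indep_of_mem {V : Type*} [Fintype V] [DecidableEq V] {G : SimpleGraph V}
    {ord : V → V → ℕ} {M : Finset (Sym2 (Ag V))}
    (hstab : IsStable (srAcc G) (srRk ord (Fintype.card V)) M)
    (hordLt : ∀ v w, G.Adj v w → ord v w < Fintype.card V)
    {v w : V} (hv : s(aA 1 v, bA 0 v) ∈ M) (hw : s(aA 1 w, bA 0 w) ∈ M)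
    (hadj : G.Adj v w) : False := by
  have hu := hstab.1.2
  have hacc : srAcc G (aA 1 v) (aA 1 w) :=
    Or.inl (Or.inr (Or.inr (Or.inl ⟨v, w, rfl, hadj, rfl⟩)))
  rcases noblock hstab hacc with ⟨c, hc, hrk⟩ | ⟨c, hc, hrk⟩
  · have hceq := hu _ _ _ hc hv
    subst hceq
    rw [rk_ab, rk_aa] at hrk
    have := hordLt v w hadj
    simp [rkAB] at hrk
    omega
  · have hceq := hu _ _ _ hc hw
    subst hceq
    rw [rk_ab, rk_aa] at hrk
    have := hordLt w v hadj.symm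
    simp [rkAB] at hrk
    omega

end Helpers

/-- Backward direction of the reduction: if `M*` is a stable
matching avoiding all forbidden pairs with `|M1 △ M*| ≤ 8|V| − 4ℓ`, then
`X = {v : {a₂ᵛ, b₁ᵛ} ∈ M*}` is an independent set of size at least `ℓ`. -/
theorem stmt6 {V : Type*} [Fintype V] [DecidableEq V] (G : SimpleGraph V)
    (ord : V → V → ℕ)
    (hordInj : ∀ v w w', G.Adj v w → G.Adj v w' → ord v w = ord v w' → w = w')
    (hordLt : ∀ v w, G.Adj v w → ord v w < Fintype.card V)
    (ℓ : ℕ)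
    (Mstar : Finset (Sym2 (Ag V)))
    (hstab : IsStable (srAcc G) (srRk ord (Fintype.card V)) Mstar)
    (hP : Mstar ∩ PSR V = ∅)
    (hdiff : ((M1SR V ∆ Mstar).card : ℤ) ≤ 8 * (Fintype.card V : ℤ) - 4 * (ℓ : ℤ))
    (X : Finset V)
    (hXdef : X = Finset.univ.filter (fun v => s(aA 1 v, bA 0 v) ∈ Mstar)) :
    (∀ v ∈ X, ∀ w ∈ X, ¬ G.Adj v w) ∧ ℓ ≤ X.card := by
  classical
  have hXmem : ∀ v, v ∈ X ↔ s(aA 1 v, bA 0 v) ∈ Mstar := by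
    intro v; rw [hXdef]; simp
  have hu := hstab.1.2
  constructor
  · intro v hv w hw hadj
    exact indep_of_mem hstab hordLt ((hXmem v).1 hv) ((hXmem w).1 hw) hadj
  · set n := Fintype.card V with hn
    set S : V → Finset (Sym2 (Ag V)) := fun v =>
      if s(aA 1 v, bA 0 v) ∈ Mstar then
        {s(aA 0 v, bA 0 v), s(aA 1 v, bA 1 v), s(aA 0 v, bA 1 v), s(aA 1 v, bA 0 v)}
      else
        {s(aA 1 v, bA 1 v), s(aA 2 v, bA 2 v), s(aA 3 v, bA 3 v), s(aA 4 v, bA 4 v),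
         s(aA 2 v, bA 1 v), s(aA 1 v, bA 2 v), s(aA 3 v, bA 4 v), s(aA 4 v, bA 3 v)} with hS
    have hvert : ∀ v x, x ∈ S v → ∃ i j, x = s(aA i v, bA j v) := by
      intro v x hx
      rw [hS] at hx
      dsimp only at hx
      split_ifs at hx <;> simp only [Finset.mem_insert, Finset.mem_singleton] at hx
      · rcases hx with rfl | rfl | rfl | rfl <;> exact ⟨_, _, rfl⟩
      · rcases hx with rfl | rfl | rfl | rfl | rfl | rfl | rfl | rfl <;> exact ⟨_, _, rfl⟩
    have hdisj : ∀ v ∈ (Finset.univ : Finset V), ∀ w ∈ (Finset.univ : Finset V),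
        v ≠ w → Disjoint (S v) (S w) := by
      intro v _ w _ hvw
      rw [Finset.disjoint_left]
      intro x hxv hxw
      obtain ⟨i, j, rfl⟩ := hvert v x hxv
      obtain ⟨i', j', heq⟩ := hvert w _ hxw
      exact hvw (pairv heq)
    have hsub : Finset.univ.biUnion S ⊆ M1SR V ∆ Mstar := by
      intro x hx
      rw [Finset.mem_biUnion] at hx
      obtain ⟨v, -, hx⟩ := hx
      rw [Finset.mem_symmDiff]
      rcases structure_v hstab hP v with ⟨hx1, hx2⟩ | ⟨hnx, h1, h5, h3, h7, h9⟩
      · rw [hS] at hx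
        dsimp only at hx
        rw [if_pos hx1] at hx
        simp only [Finset.mem_insert, Finset.mem_singleton] at hx
        rcases hx with rfl | rfl | rfl | rfl
        · exact Or.inl ⟨mem_M1.2 rfl, fun h => by
            have := hu _ _ _ h hx2; simp [bA, Prod.ext_iff] at this⟩
        · exact Or.inl ⟨mem_M1.2 rfl, fun h => by
            have := hu _ _ _ h hx1; simp [bA, Prod.ext_iff] at this⟩
        · exact Or.inr ⟨hx2, fun h => absurd (mem_M1.1 h) (by decide)⟩
        · exact Or.inr ⟨hx1, fun h => absurd (mem_M1.1 h) (by decide)⟩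
      · rw [hS] at hx
        dsimp only at hx
        rw [if_neg hnx] at hx
        simp only [Finset.mem_insert, Finset.mem_singleton] at hx
        rcases hx with rfl | rfl | rfl | rfl | rfl | rfl | rfl | rfl
        · exact Or.inl ⟨mem_M1.2 rfl, fun h => by
            have := hu _ _ _ h h3; simp [bA, Prod.ext_iff] at this⟩
        · exact Or.inl ⟨mem_M1.2 rfl, fun h => by
            have := hu _ _ _ h h5; simp [bA, Prod.ext_iff] at this⟩
        · exact Or.inl ⟨mem_M1.2 rfl, fun h => by
            have := hu _ _ _ h h7; simp [bA, Prod.ext_iff] at this⟩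
        · exact Or.inl ⟨mem_M1.2 rfl, fun h => by
            have := hu _ _ _ h h9; simp [bA, Prod.ext_iff] at this⟩
        · exact Or.inr ⟨h5, fun h => absurd (mem_M1.1 h) (by decide)⟩
        · exact Or.inr ⟨h3, fun h => absurd (mem_M1.1 h) (by decide)⟩
        · exact Or.inr ⟨h7, fun h => absurd (mem_M1.1 h) (by decide)⟩
        · exact Or.inr ⟨h9, fun h => absurd (mem_M1.1 h) (by decide)⟩
    have hcards : ∀ v, (S v).card = if v ∈ X then 4 else 8 := by
      intro v
      by_cases h : s(aA 1 v, bA 0 v) ∈ Mstar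
      · rw [hS]
        dsimp only
        rw [if_pos h, if_pos ((hXmem v).2 h),
          Finset.card_insert_of_notMem (by simp [Sym2.eq_iff, aA, bA, Prod.ext_iff]),
          Finset.card_insert_of_notMem (by simp [Sym2.eq_iff, aA, bA, Prod.ext_iff]),
          Finset.card_insert_of_notMem (by simp [Sym2.eq_iff, aA, bA, Prod.ext_iff]),
          Finset.card_singleton]
      · rw [hS]
        dsimp only
        rw [if_neg h, if_neg (fun hx => h ((hXmem v).1 hx)),
          Finset.card_insert_of_notMem (by simp [Sym2.eq_iff, aA, bA, Prod.ext_iff]),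
          Finset.card_insert_of_notMem (by simp [Sym2.eq_iff, aA, bA, Prod.ext_iff]),
          Finset.card_insert_of_notMem (by simp [Sym2.eq_iff, aA, bA, Prod.ext_iff]),
          Finset.card_insert_of_notMem (by simp [Sym2.eq_iff, aA, bA, Prod.ext_iff]),
          Finset.card_insert_of_notMem (by simp [Sym2.eq_iff, aA, bA, Prod.ext_iff]),
          Finset.card_insert_of_notMem (by simp [Sym2.eq_iff, aA, bA, Prod.ext_iff]),
          Finset.card_insert_of_notMem (by simp [Sym2.eq_iff, aA, bA, Prod.ext_iff]),
          Finset.card_singleton]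
    have hsum : ∑ v : V, (S v).card = 4 * X.card + 8 * (n - X.card) := by
      calc ∑ v : V, (S v).card = ∑ v : V, (if v ∈ X then 4 else 8) :=
            Finset.sum_congr rfl fun v _ => hcards v
        _ = 4 * X.card + 8 * (n - X.card) := by
            rw [← Finset.sum_add_sum_compl X]
            have e1 : ∑ v ∈ X, (if v ∈ X then (4 : ℕ) else 8) = 4 * X.card := by
              rw [Finset.sum_congr rfl (fun v hv => if_pos hv), Finset.sum_const,
                smul_eq_mul, mul_comm]
            have e2 : ∑ v ∈ Xᶜ, (if v ∈ X then (4 : ℕ) else 8) = 8 * (n - X.card) := by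
              rw [Finset.sum_congr rfl (fun v hv => if_neg (Finset.mem_compl.1 hv)),
                Finset.sum_const, smul_eq_mul, Finset.card_compl, mul_comm]
            rw [e1, e2]
    have hbi : 4 * X.card + 8 * (n - X.card) ≤ (M1SR V ∆ Mstar).card := by
      have h := Finset.card_le_card hsub
      rwa [Finset.card_biUnion hdisj, hsum] at h
    have hXn : X.card ≤ n := by
      have := Finset.card_le_card (Finset.subset_univ X)
      rwa [Finset.card_univ] at this
    omega
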